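/- arXiv:1101.4113 — 2 statements merged into one kernel-verified Lean document; each statement's English description precedes it below -/
import Mathlib

section
/- For every X = (X_i, φ_i) ∈ Mor_n(A), the object Mimo X lies in the monomorphism category S_n(A), and the canonical projection Mimo X → X (given branchwise by projection onto the first summand) is a minimal right approximation of X in S_n(A). -/
open CategoryTheory CategoryTheory.Limits

universe u

abbrev Mor (A : Type u) [Ring A] (n : ℕ) : Type _ :=
  ComposableArrows (ModuleCat.{u} A) (n - 1)

noncomputable instance (A : Type u) [Ring A] (n : ℕ) : Abelian (Mor A n) :=
  CategoryTheory.Abelian.functorCategoryAbelian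

variable {A : Type u} [Ring A] {n : ℕ}

/-- An object of `Mor_n(A)` lies in the monomorphism category `S_n(A)` iff all its
structure maps are injective. -/
def IsMonoObj (X : Mor A n) : Prop :=
  ∀ (i j : Fin (n - 1 + 1)) (h : i ≤ j), Function.Injective (X.map (homOfLE h))

/-- An object of `Mor_n(A)` lies in the epimorphism category `F_n(A)` iff all its
structure maps are surjective. -/
def IsEpiObj (X : Mor A n) : Prop :=
  ∀ (i j : Fin (n - 1 + 1)) (h : i ≤ j), Function.Surjective (X.map (homOfLE h))

/-- All branches of `X` are finitely generated `A`-modules. -/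
def FGObj (X : Mor A n) : Prop := ∀ i, Module.Finite A (X.obj i)

/-- A monotone chain of submodules of a fixed module `M`, regarded as an object of
`Mor_n(A)` via the inclusion maps. -/
noncomputable def subChain (M : ModuleCat.{u} A) (S : Fin (n - 1 + 1) → Submodule A M)
    (hS : Monotone S) : Mor A n :=
  ComposableArrows.mkOfObjOfMapSucc (fun k => ModuleCat.of A (S k))
    (fun k => ModuleCat.ofHom (Submodule.inclusion (hS (Fin.castSucc_le_succ k))))

/-- A monotone chain of submodules of `M`, regarded as the chain of quotients of `M`,
an object of `Mor_n(A)` via the projection maps. -/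
noncomputable def quotChain (M : ModuleCat.{u} A) (S : Fin (n - 1 + 1) → Submodule A M)
    (hS : Monotone S) : Mor A n :=
  ComposableArrows.mkOfObjOfMapSucc (fun k => ModuleCat.of A (M ⧸ S k))
    (fun k => ModuleCat.ofHom (Submodule.mapQ _ _ LinearMap.id
      (by simpa using hS (Fin.castSucc_le_succ k))))

section GenericCategoryDefs

variable {C : Type*} [Category C]

/-- `f : S ⟶ X` is a right approximation of `X` with respect to the full subcategory of
objects satisfying `P` if `S` satisfies `P` and every map `T ⟶ X` with `P T` factors
through `f`. -/
def RightApprox (P : C → Prop) {S X : C} (f : S ⟶ X) : Prop :=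
  P S ∧ ∀ (T : C), P T → ∀ g : T ⟶ X, ∃ h : T ⟶ S, h ≫ f = g

/-- `f : X ⟶ S` is a left approximation of `X` with respect to the full subcategory of
objects satisfying `P`. -/
def LeftApprox (P : C → Prop) {X S : C} (f : X ⟶ S) : Prop :=
  P S ∧ ∀ (T : C), P T → ∀ g : X ⟶ T, ∃ h : S ⟶ T, f ≫ h = g

/-- `f : S ⟶ X` is right minimal. -/
def RightMinimal {S X : C} (f : S ⟶ X) : Prop :=
  ∀ h : S ⟶ S, h ≫ f = f → IsIso h

/-- `f : X ⟶ S` is left minimal. -/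
def LeftMinimal {X S : C} (f : X ⟶ S) : Prop :=
  ∀ h : S ⟶ S, f ≫ h = f → IsIso h

/-- An object is indecomposable if it is nonzero and in any direct sum decomposition
one of the summands vanishes. -/
def Indec [Limits.HasZeroMorphisms C] [Limits.HasBinaryBiproducts C] (X : C) : Prop :=
  ¬ Limits.IsZero X ∧
    ∀ (Y Z : C), Nonempty (X ≅ Y ⊞ Z) → Limits.IsZero Y ∨ Limits.IsZero Z

variable [Limits.HasZeroMorphisms C]

/-- An Auslander–Reiten (almost split) sequence in the full (exact) subcategory of
objects satisfying `P`: a non-split short exact sequence with all three terms in the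
subcategory, indecomposable end terms, whose left map is left almost split and right
map is right almost split in the subcategory. -/
def IsARSeqIn [Limits.HasBinaryBiproducts C] (P : C → Prop) (S : ShortComplex C) : Prop :=
  S.ShortExact ∧ P S.X₁ ∧ P S.X₂ ∧ P S.X₃ ∧
    ¬ IsSplitEpi S.g ∧ Indec S.X₁ ∧ Indec S.X₃ ∧
    (∀ (T : C), P T → ∀ g' : T ⟶ S.X₃, ¬ IsSplitEpi g' → ∃ h : T ⟶ S.X₂, h ≫ S.g = g') ∧
    (∀ (T : C), P T → ∀ f' : S.X₁ ⟶ T, ¬ IsSplitMono f' → ∃ h : S.X₂ ⟶ T, S.f ≫ h = f')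

/-- An object `X` of the exact subcategory of objects satisfying `P` is projective in
this subcategory if every conflation in the subcategory lifts against `X`. -/
def ProjectiveIn (P : C → Prop) (X : C) : Prop :=
  P X ∧ ∀ (S : ShortComplex C), S.ShortExact → P S.X₁ → P S.X₂ → P S.X₃ →
    ∀ g : X ⟶ S.X₃, ∃ h : X ⟶ S.X₂, h ≫ S.g = g

/-- An object `X` of the exact subcategory of objects satisfying `P` is injective in
this subcategory if every conflation in the subcategory extends along `X`. -/
def InjectiveIn (P : C → Prop) (X : C) : Prop :=
  P X ∧ ∀ (S : ShortComplex C), S.ShortExact → P S.X₁ → P S.X₂ → P S.X₃ →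
    ∀ f : S.X₁ ⟶ X, ∃ h : S.X₂ ⟶ X, S.f ≫ h = f

end GenericCategoryDefs

section Mimo

/-- `f : M ⟶ N` is an injective envelope: `N` is an injective module, `f` is injective,
and the image of `f` is an essential submodule of `N`. -/
def IsInjEnvelope {M N : ModuleCat.{u} A} (f : M ⟶ N) : Prop :=
  Injective N ∧ Function.Injective f ∧
    ∀ S : Submodule A N, S ≠ ⊥ → S ⊓ LinearMap.range f.hom ≠ ⊥

/-- The data needed for the construction of `Mimo X`: for each structure map `φ_l` of
`X`, an injective module `I l`, and a map `e l` from the source of `φ_l` to `I l` whose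
restriction to `Ker φ_l` is an injective envelope of `Ker φ_l`. -/
structure MimoData (X : Mor A n) : Type _ where
  I : Fin (n - 1) → ModuleCat.{u} A
  e : ∀ l : Fin (n - 1), X.obj l.castSucc ⟶ I l
  env : ∀ l : Fin (n - 1),
    IsInjEnvelope (ModuleCat.ofHom
      ((e l).hom.comp (Submodule.subtype
        (LinearMap.ker (X.map (homOfLE (Fin.castSucc_le_succ l))).hom))) :
      ModuleCat.of A (LinearMap.ker (X.map (homOfLE (Fin.castSucc_le_succ l))).hom) ⟶ I l)

namespace MimoData

variable {X : Mor A n} (d : MimoData X)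

/-- The branch of `Mimo X` at (ascending) index `k`:
`X_k ⊕ (⨁_{l < k} IKer φ_l)`. -/
noncomputable abbrev branch (k : Fin (n - 1 + 1)) : ModuleCat.{u} A :=
  ModuleCat.of A (X.obj k × ∀ l : {l : Fin (n - 1) // (l : ℕ) < (k : ℕ)}, d.I l)

/-- The structure map of `Mimo X` from branch `k` to branch `k+1`. -/
noncomputable def mapSucc (k : Fin (n - 1)) : d.branch k.castSucc ⟶ d.branch k.succ :=
  ModuleCat.ofHom
    (LinearMap.prod
      ((X.map (homOfLE (Fin.castSucc_le_succ k))).hom.comp (LinearMap.fst A _ _))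
      (LinearMap.pi (fun l => by
        by_cases h : (l.1 : ℕ) < ((k.castSucc : Fin (n - 1 + 1)) : ℕ)
        · exact (LinearMap.proj (⟨l.1, h⟩ : {l : Fin (n - 1) //
            (l : ℕ) < ((k.castSucc : Fin (n - 1 + 1)) : ℕ)})).comp (LinearMap.snd A _ _)
        · have hl : l.1 = k := by
            apply Fin.ext
            have h2 := l.2
            simp only [Fin.coe_castSucc, Fin.val_succ] at h h2
            omega
          rw [hl]
          exact (d.e k).hom.comp (LinearMap.fst A _ _))))

/-- The object `Mimo X` of `S_n(A)` built from the data `d`. -/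
noncomputable def obj : Mor A n :=
  ComposableArrows.mkOfObjOfMapSucc d.branch d.mapSucc

/-- The canonical projection `Mimo X ⟶ X` (branchwise the projection onto the first
direct summand). -/
noncomputable def π : d.obj ⟶ X :=
  ComposableArrows.homMk (fun k => ModuleCat.ofHom (LinearMap.fst A _ _))
    (by
      intro i hi
      have : (d.obj).map' i (i + 1) = d.mapSucc ⟨i, hi⟩ :=
        ComposableArrows.mkOfObjOfMapSucc_map_succ d.branch d.mapSucc i hi
      rw [this]
      rfl)

end MimoData

end Mimo



namespace MimoData
variable {X : Mor A n} (d : MimoData X)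

lemma mapSucc_snd_lt (k : Fin (n-1)) (p : d.branch k.castSucc) (l : Fin (n-1)) (h : (l:ℕ) < (k:ℕ))
    (h' : (l:ℕ) < ((k.succ : Fin (n-1+1)) : ℕ)) :
    (d.mapSucc k p).2 ⟨l, h'⟩ = p.2 ⟨l, h⟩ := by
  simp only [MimoData.mapSucc]
  erw [ModuleCat.hom_ofHom, LinearMap.prod_apply]
  simp only [Function.prod_apply]
  erw [LinearMap.pi_apply]
  split
  · rfl
  · next hc => exact absurd (show (↑l:ℕ) < ((k.castSucc : Fin (n-1+1)):ℕ) from h) hc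

lemma mapSucc_snd_self (k : Fin (n-1)) (p : d.branch k.castSucc)
    (h' : ((k:ℕ)) < ((k.succ : Fin (n-1+1)) : ℕ)) :
    (d.mapSucc k p).2 ⟨k, h'⟩ = d.e k p.1 := by
  simp only [MimoData.mapSucc]
  erw [ModuleCat.hom_ofHom, LinearMap.prod_apply]
  simp only [Function.prod_apply]
  erw [LinearMap.pi_apply]
  split
  · next hc => exact absurd (show (↑k:ℕ) < (↑k:ℕ) from hc) (lt_irrefl _)
  · rfl

lemma mapSucc_fst (k : Fin (n-1)) (p : d.branch k.castSucc) :
    (d.mapSucc k p).1 = X.map (homOfLE (Fin.castSucc_le_succ k)) p.1 := rfl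

end MimoData

namespace MimoData
variable {X : Mor A n} (d : MimoData X)

lemma obj_map_succ (k : Fin (n-1)) :
    d.obj.map (homOfLE (Fin.castSucc_le_succ k)) = d.mapSucc k :=
  ComposableArrows.mkOfObjOfMapSucc_map_succ d.branch d.mapSucc k.val k.isLt

end MimoData

lemma isMonoObj_of_succ (F : Mor A n)
    (h : ∀ k : Fin (n-1), Function.Injective (F.map (homOfLE (Fin.castSucc_le_succ k)))) :
    IsMonoObj F := by
  intro i j hij
  obtain ⟨m, hm⟩ := Nat.le.dest (show (i:ℕ) ≤ (j:ℕ) from hij)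
  induction m generalizing j with
  | zero =>
    obtain rfl : i = j := Fin.ext (by omega)
    rw [show homOfLE hij = 𝟙 i from Subsingleton.elim _ _, F.map_id]
    exact fun a b hab => hab
  | succ m ih =>
    rcases Fin.eq_zero_or_eq_succ j with rfl | ⟨k, rfl⟩
    · rw [Fin.val_zero] at hm; omega
    · have h1 : i ≤ k.castSucc := by
        rw [Fin.le_def]; simp only [Fin.coe_castSucc]
        simp only [Fin.val_succ] at hm; omega
      rw [show homOfLE hij = homOfLE h1 ≫ homOfLE (Fin.castSucc_le_succ k) from
        Subsingleton.elim _ _, F.map_comp]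
      have h2 := ih k.castSucc h1
        (by simp only [Fin.coe_castSucc]; simp only [Fin.val_succ] at hm; omega)
      exact fun a b hab => h2 ((h k) hab)

namespace MimoData
variable {X : Mor A n} (d : MimoData X)

lemma mapSucc_injective (k : Fin (n-1)) : Function.Injective (d.mapSucc k) := by
  rw [injective_iff_map_eq_zero]
  intro p hp
  have h1 : X.map (homOfLE (Fin.castSucc_le_succ k)) p.1 = 0 := by
    rw [← d.mapSucc_fst k p, hp]; rfl
  have hself : d.e k p.1 = 0 := by
    rw [← d.mapSucc_snd_self k p (by simp), hp]; rfl
  have hx : p.1 = 0 := by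
    have := (d.env k).2.1
    have h0 : (ModuleCat.ofHom ((d.e k).hom.comp (Submodule.subtype
        (LinearMap.ker (X.map (homOfLE (Fin.castSucc_le_succ k))).hom))))
        ⟨p.1, h1⟩ = 0 := hself
    have := this (a₁ := ⟨p.1, h1⟩) (a₂ := 0) (by simpa using h0)
    simpa using congrArg Subtype.val this
  have hf : p.2 = 0 := by
    funext l
    have hl : (l.1 : ℕ) < (k : ℕ) := l.2
    have := d.mapSucc_snd_lt k p l.1 hl (by simp; omega)
    rw [hp] at this
    exact this.symm
  calc p = (p.1, p.2) := rfl
    _ = 0 := by rw [hx, hf]; rfl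

lemma isMonoObj_obj : IsMonoObj d.obj := by
  apply isMonoObj_of_succ
  intro k
  rw [d.obj_map_succ k]
  exact d.mapSucc_injective k

end MimoData

namespace MimoData
variable {X : Mor A n} (d : MimoData X)
variable (T : Mor A n) (hT : IsMonoObj T) (g : T ⟶ X)

/-- Iterated extension of `e l ∘ g` along the (mono) structure maps of `T`. -/
noncomputable def lift (l : Fin (n-1)) :
    ∀ m : Fin (n-1+1), (l:ℕ) < (m:ℕ) → (T.obj m ⟶ d.I l) :=
  haveI : Injective (d.I l) := (d.env l).1
  Fin.induction
    (fun h => absurd h (by simp))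
    (fun k ih h =>
      haveI : Mono (T.map (homOfLE (Fin.castSucc_le_succ k))) :=
        (ModuleCat.mono_iff_injective _).mpr (hT _ _ _)
      if hk : (l:ℕ) < ((k.castSucc : Fin (n-1+1)):ℕ) then
        Injective.factorThru (ih hk) (T.map (homOfLE (Fin.castSucc_le_succ k)))
      else
        Injective.factorThru
          (g.app k.castSucc ≫ X.map (eqToHom (show k.castSucc = l.castSucc from by
            congr 1
            exact Fin.ext (by simp only [Fin.coe_castSucc, Fin.val_succ] at h hk; omega))) ≫ d.e l)
          (T.map (homOfLE (Fin.castSucc_le_succ k))))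

lemma lift_succ_lt (l k : Fin (n-1)) (hk : (l:ℕ) < ((k.castSucc : Fin (n-1+1)):ℕ))
    (h : (l:ℕ) < ((k.succ : Fin (n-1+1)):ℕ)) :
    T.map (homOfLE (Fin.castSucc_le_succ k)) ≫ d.lift T hT g l k.succ h
      = d.lift T hT g l k.castSucc hk := by
  haveI : Injective (d.I l) := (d.env l).1
  haveI : Mono (T.map (homOfLE (Fin.castSucc_le_succ k))) :=
    (ModuleCat.mono_iff_injective _).mpr (hT _ _ _)
  simp only [lift, Fin.induction_succ]
  rw [dif_pos hk]
  exact Injective.comp_factorThru _ _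

lemma lift_succ_base (l : Fin (n-1)) (h : (l:ℕ) < ((l.succ : Fin (n-1+1)):ℕ)) :
    T.map (homOfLE (Fin.castSucc_le_succ l)) ≫ d.lift T hT g l l.succ h
      = g.app l.castSucc ≫ d.e l := by
  haveI : Injective (d.I l) := (d.env l).1
  haveI : Mono (T.map (homOfLE (Fin.castSucc_le_succ l))) :=
    (ModuleCat.mono_iff_injective _).mpr (hT _ _ _)
  simp only [lift, Fin.induction_succ]
  rw [dif_neg (by simp)]
  rw [Injective.comp_factorThru]
  simp

end MimoData

namespace MimoData
variable {X : Mor A n} (d : MimoData X)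
variable (T : Mor A n) (hT : IsMonoObj T) (g : T ⟶ X)

noncomputable def liftHom : T ⟶ d.obj :=
  ComposableArrows.homMk
    (fun m => ModuleCat.ofHom
      (LinearMap.prod (g.app m).hom
        (LinearMap.pi (fun l => ((d.lift T hT g l.1 m l.2).hom : T.obj m →ₗ[A] d.I l.1)))))
    (by
      intro i hi
      have hobj : (d.obj).map' i (i + 1) = d.mapSucc ⟨i, hi⟩ :=
        ComposableArrows.mkOfObjOfMapSucc_map_succ d.branch d.mapSucc i hi
      rw [hobj]
      set k : Fin (n-1) := ⟨i, hi⟩ with hk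
      have hT' : T.map' i (i+1) = T.map (homOfLE (Fin.castSucc_le_succ k)) := rfl
      rw [hT']
      apply ModuleCat.hom_ext
      apply LinearMap.ext
      intro y
      have hcomp1 : ∀ (W W' W'' : ModuleCat.{u} A) (f : W ⟶ W') (g' : W' ⟶ W'') (w : W),
          (f ≫ g') w = g' (f w) := fun _ _ _ _ _ _ => rfl
      erw [hcomp1, hcomp1]
      apply Prod.ext
      · show g.app k.succ (T.map (homOfLE (Fin.castSucc_le_succ k)) y)
          = (d.mapSucc k _).1
        erw [d.mapSucc_fst]
        have := g.naturality (homOfLE (Fin.castSucc_le_succ k))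
        exact congrArg (fun (F : T.obj k.castSucc ⟶ X.obj k.succ) => F y) this
      · funext l
        obtain ⟨l, hl⟩ := l
        by_cases hlk : (l:ℕ) < (k:ℕ)
        · refine Eq.trans ?_ (d.mapSucc_snd_lt k _ l hlk hl).symm
          show d.lift T hT g l k.succ hl (T.map (homOfLE (Fin.castSucc_le_succ k)) y)
            = d.lift T hT g l k.castSucc hlk y
          exact congrArg (fun (F : T.obj k.castSucc ⟶ d.I l) => F y)
            (d.lift_succ_lt T hT g l k hlk hl)
        · obtain rfl : l = k := Fin.ext (by simp only [Fin.val_succ, Fin.val_mk] at hl hlk ⊢; change (l:ℕ) < i + 1 at hl; change ¬ (l:ℕ) < i at hlk; show (l:ℕ) = i; omega)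
          refine Eq.trans ?_ (d.mapSucc_snd_self k _ hl).symm
          show d.lift T hT g k k.succ hl (T.map (homOfLE (Fin.castSucc_le_succ k)) y)
            = d.e k (g.app k.castSucc y)
          exact congrArg (fun (F : T.obj k.castSucc ⟶ d.I k) => F y)
            (d.lift_succ_base T hT g k hl))

lemma liftHom_comp_π : d.liftHom T hT g ≫ d.π = g := by
  apply NatTrans.ext
  funext m
  show (d.liftHom T hT g).app m ≫ d.π.app m = g.app m
  simp only [liftHom, π, ComposableArrows.homMk_app]
  apply ModuleCat.hom_ext
  apply LinearMap.ext
  intro y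
  rfl

lemma rightApprox : RightApprox IsMonoObj d.π :=
  ⟨d.isMonoObj_obj, fun T hT g => ⟨d.liftHom T hT g, d.liftHom_comp_π T hT g⟩⟩

end MimoData

/-- An endomorphism of an injective module fixing pointwise an essential submodule
is bijective. -/
lemma bijective_of_fix_essential {K I : ModuleCat.{u} A} (f : K ⟶ I)
    (hinj : Injective I)
    (hess : ∀ S : Submodule A I, S ≠ ⊥ → S ⊓ LinearMap.range f.hom ≠ ⊥)
    (γ : I ⟶ I) (hγ : ∀ y : K, γ (f y) = f y) : Function.Bijective γ := by
  have hker : ∀ (δ : I ⟶ I), (∀ y : K, δ (f y) = f y) → Function.Injective δ := by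
    intro δ hδ
    have hbot : LinearMap.ker δ.hom = ⊥ := by
      by_contra hne
      obtain ⟨z, hz, hz0⟩ := Submodule.exists_mem_ne_zero_of_ne_bot (hess _ hne)
      obtain ⟨hzk, y, rfl⟩ := hz
      exact hz0 (by rw [← hδ y]; exact hzk)
    intro a b hab
    have : a - b ∈ LinearMap.ker δ.hom := by simp [LinearMap.mem_ker, map_sub, hab]
    rw [hbot, Submodule.mem_bot, sub_eq_zero] at this
    exact this
  have hγinj : Function.Injective γ := hker γ hγ
  haveI := hinj
  haveI : Mono γ := (ModuleCat.mono_iff_injective _).mpr hγinj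
  set δ : I ⟶ I := Injective.factorThru (𝟙 I) γ with hδdef
  have hcomp : γ ≫ δ = 𝟙 I := Injective.comp_factorThru _ _
  have hpt : ∀ z : I, δ (γ z) = z := fun z =>
    congrArg (fun (F : I ⟶ I) => F z) hcomp
  have hδfix : ∀ y : K, δ (f y) = f y := fun y => by
    conv_lhs => rw [← hγ y]
    exact hpt (f y)
  have hδinj : Function.Injective δ := hker δ hδfix
  refine ⟨hγinj, fun z => ⟨δ z, hδinj ?_⟩⟩
  rw [hpt (δ z)]

namespace MimoData
variable {X : Mor A n} (d : MimoData X)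

/-- Second factor of a branch. -/
abbrev low (m : Fin (n-1+1)) : Type u := ∀ l : {l : Fin (n-1) // (l:ℕ) < (m:ℕ)}, d.I l

variable (k : Fin (n-1))

noncomputable def Emap : d.low k.castSucc →ₗ[A] d.low k.succ where
  toFun h l := if hh : (l.1:ℕ) < ((k.castSucc : Fin (n-1+1)):ℕ) then h ⟨l.1, hh⟩ else 0
  map_add' a b := by
    funext l
    simp only [Pi.add_apply]
    split
    · rfl
    · rw [add_zero]
  map_smul' a b := by
    funext l
    simp only [Pi.smul_apply, RingHom.id_apply]
    split
    · rfl
    · rw [smul_zero]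

noncomputable def Pmap : d.low k.succ →ₗ[A] d.low k.castSucc where
  toFun v l := v ⟨l.1, by
    have := l.2; simp only [Fin.coe_castSucc] at this; simp only [Fin.val_succ]; omega⟩
  map_add' a b := rfl
  map_smul' a b := rfl

noncomputable def Qmap : d.low k.succ →ₗ[A] d.I k where
  toFun v := v ⟨k, by simp⟩
  map_add' a b := rfl
  map_smul' a b := rfl

noncomputable def Jmap : d.I k →ₗ[A] d.low k.succ where
  toFun δ l := if h : l.1 = k then cast (congrArg (fun t : Fin (n-1) => (d.I t : Type u)) h).symm δ
    else 0
  map_add' a b := by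
    funext l
    simp only [Pi.add_apply]
    split
    · next h =>
      obtain ⟨lv, hl⟩ := l
      have h2 : lv = k := h
      subst h2
      rfl
    · rw [add_zero]
  map_smul' a b := by
    funext l
    simp only [Pi.smul_apply, RingHom.id_apply]
    split
    · next h =>
      obtain ⟨lv, hl⟩ := l
      have h2 : lv = k := h
      subst h2
      rfl
    · rw [smul_zero]

lemma P_E (h : d.low k.castSucc) : d.Pmap k (d.Emap k h) = h := by
  funext l
  obtain ⟨lv, hl⟩ := l
  show (d.Emap k h) ⟨lv, _⟩ = h ⟨lv, hl⟩
  simp only [Emap, LinearMap.coe_mk, AddHom.coe_mk]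
  rw [dif_pos hl]

lemma Q_E (h : d.low k.castSucc) : d.Qmap k (d.Emap k h) = 0 := by
  show (d.Emap k h) ⟨k, _⟩ = 0
  simp only [Emap, LinearMap.coe_mk, AddHom.coe_mk]
  rw [dif_neg (by simp)]

lemma Q_J (δ : d.I k) : d.Qmap k (d.Jmap k δ) = δ := by
  show (d.Jmap k δ) ⟨k, _⟩ = δ
  simp only [Jmap, LinearMap.coe_mk, AddHom.coe_mk]
  rw [dif_pos trivial]
  rfl

lemma E_P_J (v : d.low k.succ) : v = d.Emap k (d.Pmap k v) + d.Jmap k (d.Qmap k v) := by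
  funext l
  obtain ⟨lv, hl⟩ := l
  rw [Pi.add_apply]
  simp only [Pmap, Emap, Qmap, Jmap, LinearMap.coe_mk, AddHom.coe_mk]
  by_cases hlk : (lv:ℕ) < ((k.castSucc : Fin (n-1+1)):ℕ)
  · rw [dif_pos hlk, dif_neg (show ¬ lv = k from fun he => by
      subst he; simp only [Fin.coe_castSucc] at hlk; omega)]
    rw [add_zero]
  · obtain rfl : lv = k := Fin.ext (by
      simp only [Fin.coe_castSucc] at hlk; simp only [Fin.val_succ] at hl; omega)
    rw [dif_neg hlk, dif_pos rfl, zero_add]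
    rfl

end MimoData

namespace MimoData
variable {X : Mor A n} (d : MimoData X) (k : Fin (n-1))

lemma mapSucc_zero_E (h : d.low k.castSucc) :
    d.mapSucc k ((0 : X.obj k.castSucc), h) = ((0 : X.obj k.succ), d.Emap k h) := by
  apply Prod.ext
  · rw [d.mapSucc_fst, map_zero]
  · funext l
    obtain ⟨lv, hl⟩ := l
    by_cases hlk : (lv:ℕ) < (k:ℕ)
    · refine Eq.trans (d.mapSucc_snd_lt k _ lv hlk hl) ?_
      show h ⟨lv, hlk⟩ = d.Emap k h ⟨lv, hl⟩
      simp only [Emap, LinearMap.coe_mk, AddHom.coe_mk]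
      rw [dif_pos (show (lv:ℕ) < ((k.castSucc : Fin (n-1+1)):ℕ) from hlk)]
    · obtain rfl : lv = k := Fin.ext (by simp only [Fin.val_succ] at hl; omega)
      refine Eq.trans (d.mapSucc_snd_self lv _ hl) ?_
      show d.e lv (0 : X.obj lv.castSucc) = d.Emap lv h ⟨lv, hl⟩
      rw [map_zero]
      simp only [Emap, LinearMap.coe_mk, AddHom.coe_mk]
      rw [dif_neg (by simp)]

lemma mapSucc_ker_J (x : X.obj k.castSucc)
    (hx : X.map (homOfLE (Fin.castSucc_le_succ k)) x = 0) :
    d.mapSucc k (x, (0 : d.low k.castSucc)) = ((0 : X.obj k.succ), d.Jmap k (d.e k x)) := by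
  apply Prod.ext
  · rw [d.mapSucc_fst]; exact hx
  · funext l
    obtain ⟨lv, hl⟩ := l
    by_cases hlk : (lv:ℕ) < (k:ℕ)
    · refine Eq.trans (d.mapSucc_snd_lt k _ lv hlk hl) ?_
      show (0 : d.low k.castSucc) ⟨lv, hlk⟩ = d.Jmap k (d.e k x) ⟨lv, hl⟩
      simp only [Jmap, LinearMap.coe_mk, AddHom.coe_mk]
      rw [dif_neg (show ¬ lv = k from fun he => by subst he; omega)]
      rfl
    · obtain rfl : lv = k := Fin.ext (by simp only [Fin.val_succ] at hl; omega)
      refine Eq.trans (d.mapSucc_snd_self lv _ hl) ?_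
      show d.e lv x = d.Jmap lv (d.e lv x) ⟨lv, hl⟩
      simp only [Jmap, LinearMap.coe_mk, AddHom.coe_mk]
      rw [dif_pos trivial]
      rfl

lemma Q_mapSucc (p : d.branch k.castSucc) :
    d.Qmap k ((d.mapSucc k p).2) = d.e k p.1 :=
  d.mapSucc_snd_self k p (by simp)

variable (G : d.obj ⟶ d.obj)

lemma app_fst (hG : G ≫ d.π = d.π) (m : Fin (n-1+1)) (p : d.branch m) : (G.app m p).1 = p.1 :=
  congrArg (fun (F : d.obj ⟶ X) => (F.app m p : X.obj m)) hG

lemma nat_succ (p : d.branch k.castSucc) :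
    G.app k.succ (d.mapSucc k p) = d.mapSucc k (G.app k.castSucc p) := by
  have h := G.naturality (homOfLE (Fin.castSucc_le_succ k))
  rw [d.obj_map_succ] at h
  exact congrArg (fun (F : d.branch k.castSucc ⟶ d.branch k.succ) => F p) h

/-- The endomorphism of `I k` induced by `G`. -/
noncomputable def gamma : d.I k →ₗ[A] d.I k where
  toFun δ := d.Qmap k ((G.app k.succ ((0 : X.obj k.succ), d.Jmap k δ)).2)
  map_add' a b := by
    dsimp only
    erw [map_add (d.Jmap k),
      show ((0 : X.obj k.succ), d.Jmap k a + d.Jmap k b)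
        = ((0 : X.obj k.succ), d.Jmap k a) + ((0 : X.obj k.succ), d.Jmap k b) from by
        rw [Prod.mk_add_mk, add_zero],
      map_add (ConcreteCategory.hom (G.app k.succ)), Prod.snd_add, map_add]
  map_smul' a b := by
    dsimp only
    erw [map_smul (d.Jmap k),
      show ((0 : X.obj k.succ), a • d.Jmap k b)
        = a • ((0 : X.obj k.succ), d.Jmap k b) from by rw [Prod.smul_mk, smul_zero],
      map_smul (ConcreteCategory.hom (G.app k.succ))]
    exact (d.Qmap k).map_smul a _

end MimoData

namespace MimoData
variable {X : Mor A n} (d : MimoData X) (k : Fin (n-1)) (G : d.obj ⟶ d.obj)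

lemma gamma_fix (hG : G ≫ d.π = d.π) (x : X.obj k.castSucc)
    (hx : X.map (homOfLE (Fin.castSucc_le_succ k)) x = 0) :
    d.gamma k G (d.e k x) = d.e k x := by
  show d.Qmap k ((G.app k.succ ((0 : X.obj k.succ), d.Jmap k (d.e k x))).2) = d.e k x
  erw [← d.mapSucc_ker_J k x hx, d.nat_succ k G, d.Q_mapSucc, d.app_fst G hG]

lemma gamma_bijective (hG : G ≫ d.π = d.π) : Function.Bijective (d.gamma k G) := by
  refine bijective_of_fix_essential
    (ModuleCat.ofHom ((d.e k).hom.comp (Submodule.subtype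
      (LinearMap.ker (X.map (homOfLE (Fin.castSucc_le_succ k))).hom))))
    (d.env k).1 (d.env k).2.2 (ModuleCat.ofHom (d.gamma k G)) ?_
  rintro ⟨y, hy⟩
  exact d.gamma_fix k G hG y hy

lemma snd_E (hG : G ≫ d.π = d.π) (h : d.low k.castSucc) :
    (G.app k.succ ((0 : X.obj k.succ), d.Emap k h)).2
      = d.Emap k ((G.app k.castSucc ((0 : X.obj k.castSucc), h)).2) := by
  have h1 := d.nat_succ k G ((0 : X.obj k.castSucc), h)
  rw [d.mapSucc_zero_E] at h1
  have h2 : G.app k.castSucc ((0 : X.obj k.castSucc), h)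
      = ((0 : X.obj k.castSucc), (G.app k.castSucc ((0 : X.obj k.castSucc), h)).2) :=
    Prod.ext (d.app_fst G hG _ _) rfl
  rw [h2, d.mapSucc_zero_E] at h1
  exact congrArg Prod.snd h1

end MimoData

namespace MimoData
variable {X : Mor A n} (d : MimoData X) (G : d.obj ⟶ d.obj)

lemma app_bijective (hG : G ≫ d.π = d.π) (m : Fin (n-1+1)) :
    Function.Bijective (G.app m) := by
  induction m using Fin.induction with
  | zero =>
    constructor
    · intro a b hab
      refine Prod.ext ?_ (funext fun l => absurd l.2 (by simp))
      rw [← d.app_fst G hG 0 a, ← d.app_fst G hG 0 b, hab]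
    · intro q
      exact ⟨q, Prod.ext (d.app_fst G hG 0 q) (funext fun l => absurd l.2 (by simp))⟩
  | succ k ih =>
    have hQB : ∀ f : d.low k.succ,
        d.Qmap k ((G.app k.succ ((0 : X.obj k.succ), f)).2)
          = d.gamma k G (d.Qmap k f) := by
      intro f
      conv_lhs => rw [d.E_P_J k f]
      rw [show ((0 : X.obj k.succ), d.Emap k (d.Pmap k f) + d.Jmap k (d.Qmap k f))
          = ((0 : X.obj k.succ), d.Emap k (d.Pmap k f))
            + ((0 : X.obj k.succ), d.Jmap k (d.Qmap k f)) from by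
        rw [Prod.mk_add_mk, add_zero]]
      erw [map_add (ConcreteCategory.hom (G.app k.succ)), Prod.snd_add, map_add, d.snd_E k G hG, d.Q_E, zero_add]
      rfl
    have hBkinj : ∀ h : d.low k.castSucc,
        (G.app k.castSucc ((0 : X.obj k.castSucc), h)).2 = 0 → h = 0 := by
      intro h hh
      have h2 : G.app k.castSucc ((0 : X.obj k.castSucc), h) = G.app k.castSucc 0 := by
        rw [map_zero]
        exact Prod.ext (d.app_fst G hG _ _) hh
      exact congrArg Prod.snd (ih.1 h2)
    have hBksurj : ∀ u : d.low k.castSucc, ∃ h : d.low k.castSucc,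
        (G.app k.castSucc ((0 : X.obj k.castSucc), h)).2 = u := by
      intro u
      obtain ⟨p, hp⟩ := ih.2 ((0 : X.obj k.castSucc), u)
      have hp1 : p.1 = 0 := by rw [← d.app_fst G hG _ p, hp]
      refine ⟨p.2, ?_⟩
      rw [show ((0 : X.obj k.castSucc), p.2) = p from Prod.ext hp1.symm rfl, hp]
    constructor
    · rw [injective_iff_map_eq_zero]
      intro p hp
      have hp1 : p.1 = 0 := by rw [← d.app_fst G hG _ p, hp]; rfl
      have hpe : p = ((0 : X.obj k.succ), p.2) := Prod.ext hp1 rfl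
      have hB : (G.app k.succ ((0 : X.obj k.succ), p.2)).2 = 0 := by
        rw [← hpe, hp]; rfl
      have h1 : d.gamma k G (d.Qmap k p.2) = 0 := by
        rw [← hQB p.2, hB, map_zero]
      have hQ : d.Qmap k p.2 = 0 :=
        (d.gamma_bijective k G hG).1
          (show d.gamma k G (d.Qmap k p.2) = d.gamma k G 0 by rw [map_zero]; exact h1)
      have hfE : p.2 = d.Emap k (d.Pmap k p.2) := by
        conv_lhs => rw [d.E_P_J k p.2]
        rw [hQ, map_zero, add_zero]
      have hBE : d.Emap k ((G.app k.castSucc ((0 : X.obj k.castSucc), d.Pmap k p.2)).2) = 0 := by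
        rw [← d.snd_E k G hG, ← hfE, hB]
      have hPf : (G.app k.castSucc ((0 : X.obj k.castSucc), d.Pmap k p.2)).2 = 0 := by
        have h3 := congrArg (d.Pmap k) hBE
        rw [d.P_E, map_zero] at h3
        exact h3
      have h4 : d.Pmap k p.2 = 0 := hBkinj _ hPf
      rw [hpe, hfE, h4, map_zero]
      rfl
    · rintro ⟨x, w⟩
      set r := w - (G.app k.succ (x, (0 : d.low k.succ))).2 with hr
      obtain ⟨δ, hδ⟩ := (d.gamma_bijective k G hG).2 (d.Qmap k r)
      obtain ⟨h, hh⟩ := hBksurj (d.Pmap k r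
        - d.Pmap k ((G.app k.succ ((0 : X.obj k.succ), d.Jmap k δ)).2))
      have hBh' : (G.app k.succ ((0 : X.obj k.succ), d.Emap k h + d.Jmap k δ)).2 = r := by
        rw [show ((0 : X.obj k.succ), d.Emap k h + d.Jmap k δ)
            = ((0 : X.obj k.succ), d.Emap k h) + ((0 : X.obj k.succ), d.Jmap k δ) from by
          rw [Prod.mk_add_mk, add_zero]]
        erw [map_add (ConcreteCategory.hom (G.app k.succ)), Prod.snd_add]
        set B1 := (G.app k.succ ((0 : X.obj k.succ), d.Emap k h)).2 with hB1
        set B2 := (G.app k.succ ((0 : X.obj k.succ), d.Jmap k δ)).2 with hB2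
        have hQv : d.Qmap k (B1 + B2) = d.Qmap k r := by
          rw [map_add, show d.Qmap k B1 = 0 from by
              rw [hB1, d.snd_E k G hG, d.Q_E], zero_add]
          have : d.Qmap k B2 = d.gamma k G δ := by rw [hB2, hQB, d.Q_J]
          rw [this, hδ]
        have hPv : d.Pmap k (B1 + B2) = d.Pmap k r := by
          rw [map_add, show d.Pmap k B1 = (G.app k.castSucc ((0 : X.obj k.castSucc), h)).2 from by
              rw [hB1, d.snd_E k G hG, d.P_E], hh]
          rw [sub_add_cancel]
        rw [d.E_P_J k (B1 + B2), hQv, hPv, ← d.E_P_J k r]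
      refine ⟨(x, d.Emap k h + d.Jmap k δ), ?_⟩
      refine Prod.ext (d.app_fst G hG _ _) ?_
      rw [show (x, d.Emap k h + d.Jmap k δ)
          = (x, (0 : d.low k.succ)) + ((0 : X.obj k.succ), d.Emap k h + d.Jmap k δ) from by
        rw [Prod.mk_add_mk, add_zero, zero_add]]
      erw [map_add (ConcreteCategory.hom (G.app k.succ)), Prod.snd_add, hBh', hr]
      show ((G.app k.succ) (x, (0 : d.low k.succ))).2
        + (w - ((G.app k.succ) (x, (0 : d.low k.succ))).2) = w
      abel

lemma rightMinimal : RightMinimal d.π := by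
  intro G hG
  have happ := d.app_bijective G hG
  haveI : ∀ m, IsIso (G.app m) := fun m => by
    haveI : Mono (G.app m) := (ModuleCat.mono_iff_injective _).mpr (happ m).1
    haveI : Epi (G.app m) := (ModuleCat.epi_iff_surjective _).mpr (happ m).2
    exact isIso_of_mono_of_epi _
  exact NatIso.isIso_of_isIso_app G

end MimoData


/-!
STATEMENT 10: For every `X ∈ Mor_n(A)`, the object `Mimo X` lies in the monomorphism
category `S_n(A)`, and the canonical projection `Mimo X → X` (branchwise the projection
onto the first summand) is a minimal right approximation of `X` in `S_n(A)`.
(`Mimo X` is built from a choice of injective envelopes of the kernels of the structure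
maps and extensions thereof; the statement holds for any such choice, encoded by
`MimoData X`.)
-/
theorem stmt_10
    (R : Type u) [CommRing R] [IsArtinianRing R] [Algebra R A] [Module.Finite R A]
    (hn : 2 ≤ n) (X : Mor A n) (hX : FGObj X) (d : MimoData X) :
    IsMonoObj d.obj ∧ RightApprox IsMonoObj d.π ∧ RightMinimal d.π := by
  exact ⟨d.isMonoObj_obj, d.rightApprox, d.rightMinimal⟩
end

section
/- Suppose 0 → A → B ⊕ I → C → 0 is a short exact sequence of A-modules with I injective, and write the first map as (f, h)^T with f : A → B. Then there is an injective module J with I ≅ IKer f ⊕ J, an extension e : A → IKer f of the injective envelope Ker f ↪ IKer f, and a map h' : A → J vanishing on Ker f, such that C ≅ Coker((f, e)^T) ⊕ J. -/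
/-!
STATEMENT 11: Suppose `0 → M → B ⊕ I → C → 0` is a short exact sequence of (finitely
generated) modules over an Artin algebra `A`, with `I` injective, and write the first
map as `(f, h)ᵀ`.  Then there is an injective module `J` with `I ≅ IKer f ⊕ J`, an
extension `e : M → IKer f` of the injective envelope `Ker f ↪ IKer f`, and a map
`h' : M → J` vanishing on `Ker f` (with `h` corresponding to `(e, h')ᵀ` under the
decomposition of `I`), such that `C ≅ Coker((f, e)ᵀ) ⊕ J`.
-/

universe u

theorem stmt_11
    (R : Type u) [CommRing R] [IsArtinianRing R]
    (A : Type u) [Ring A] [Algebra R A] [Module.Finite R A]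
    (M B I C : Type u)
    [AddCommGroup M] [Module A M] [Module.Finite A M]
    [AddCommGroup B] [Module A B] [Module.Finite A B]
    [AddCommGroup I] [Module A I] [Module.Finite A I]
    [AddCommGroup C] [Module A C] [Module.Finite A C]
    (hI : Module.Injective A I)
    (f : M →ₗ[A] B) (h : M →ₗ[A] I)
    -- the short exact sequence `0 → M → B × I → C → 0`
    (g : B × I →ₗ[A] C) (hg : Function.Surjective g)
    (hmono : Function.Injective (f.prod h))
    (hexact : LinearMap.ker g = LinearMap.range (f.prod h))
    -- a fixed injective envelope `env : Ker f ↪ IK` of `Ker f`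
    (IK : Type u) [AddCommGroup IK] [Module A IK] (hIK : Module.Injective A IK)
    (env : LinearMap.ker f →ₗ[A] IK)
    (henv_inj : Function.Injective env)
    (henv_ess : ∀ S : Submodule A IK, S ≠ ⊥ → S ⊓ LinearMap.range env ≠ ⊥) :
    ∃ (J : Type u) (_ : AddCommGroup J) (_ : Module A J),
      Module.Injective A J ∧
      ∃ (eI : I ≃ₗ[A] IK × J) (e : M →ₗ[A] IK) (h' : M →ₗ[A] J),
        -- `e` extends the injective envelope of `Ker f`
        (∀ (x : M) (hx : x ∈ LinearMap.ker f), e x = env ⟨x, hx⟩) ∧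
        -- `h'` vanishes on `Ker f`
        (∀ x ∈ LinearMap.ker f, h' x = 0) ∧
        -- `h` corresponds to `(e, h')ᵀ` under the decomposition `I ≅ IK ⊕ J`
        (∀ x : M, eI (h x) = (e x, h' x)) ∧
        -- `C ≅ Coker((f, e)ᵀ) ⊕ J`
        Nonempty (C ≃ₗ[A] ((B × IK) ⧸ LinearMap.range (f.prod e)) × J) := by

  classical
  -- extend `env` along `h|_{ker f} : ker f → I` to get `σ : IK →ₗ I`
  obtain ⟨σ, hσ⟩ := hI.out env henv_inj (h.comp (LinearMap.ker f).subtype)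
  -- `σ` is injective
  have hσinj : Function.Injective σ := by
    rw [← LinearMap.ker_eq_bot]
    by_contra hne
    obtain ⟨y, ⟨hy1, x, hx⟩, hy0⟩ := Submodule.ne_bot_iff _ |>.1 (henv_ess _ hne)
    apply hy0
    have hhx : h x.1 = 0 := by
      have h1 := hσ x
      simp only [LinearMap.comp_apply, Submodule.subtype_apply] at h1
      rw [← h1, hx, hy1]
    have hx0 : x.1 = 0 := by
      have h2 : (f.prod h) x.1 = (f.prod h) 0 := by
        simp [LinearMap.prod_apply, hhx, x.2]
      exact hmono h2
    rw [← hx, show x = 0 from Subtype.ext hx0, map_zero]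
  -- retraction `π : I →ₗ IK` with `π ∘ σ = id`
  obtain ⟨π, hπ⟩ := hIK.out σ hσinj LinearMap.id
  simp only [LinearMap.id_apply] at hπ
  set J := LinearMap.ker π with hJdef
  -- the projection `p : I →ₗ J`
  have hmem : ∀ x : I, x - σ (π x) ∈ J := by
    intro x
    simp [hJdef, LinearMap.mem_ker, map_sub, hπ]
  set p : I →ₗ[A] ↥J := LinearMap.codRestrict J (LinearMap.id - σ.comp π) hmem with hpdef
  have hpapply : ∀ x : I, (p x : I) = x - σ (π x) := fun x => rfl
  have hpJ : ∀ j : ↥J, p (j : I) = j := by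
    intro j
    ext
    rw [hpapply, (j.2 : π (j : I) = 0), map_zero, sub_zero]
  -- the decomposition `I ≃ IK × J`
  set eI : I ≃ₗ[A] IK × ↥J :=
    { π.prod p with
      invFun := fun q => σ q.1 + (q.2 : I)
      left_inv := fun x => by
        show σ (π x) + ((p x : I)) = x
        rw [hpapply]
        abel
      right_inv := fun q => by
        have hq2 : π (q.2 : I) = 0 := q.2.2
        have hπq : π (σ q.1 + (q.2 : I)) = q.1 := by
          rw [map_add, hπ, hq2, add_zero]
        refine Prod.ext ?_ ?_
        · simpa using hπq
        · show p (σ q.1 + (q.2 : I)) = q.2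
          ext
          rw [hpapply, hπq]
          abel } with heIdef
  have heIapply : ∀ x : I, eI x = (π x, p x) := fun x => rfl
  -- `J` is injective
  have hJinj : Module.Injective A ↥J := by
    constructor
    intro X Y _ _ _ _ fi hfi gm
    obtain ⟨ψ, hψ⟩ := hI.out fi hfi (J.subtype.comp gm)
    refine ⟨p.comp ψ, fun x => ?_⟩
    simp only [LinearMap.comp_apply] at hψ ⊢
    rw [hψ x]
    exact hpJ (gm x)
  -- the maps `e` and `h'`
  set e : M →ₗ[A] IK := π.comp h with hedef
  set h' : M →ₗ[A] ↥J := p.comp h with hh'def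
  have hσenv : ∀ x : LinearMap.ker f, σ (env x) = h x.1 := by
    intro x
    have h1 := hσ x
    simpa only [LinearMap.comp_apply, Submodule.subtype_apply] using h1
  have hee : ∀ (x : M) (hx : x ∈ LinearMap.ker f), e x = env ⟨x, hx⟩ := by
    intro x hx
    show π (h x) = env ⟨x, hx⟩
    rw [← hσenv ⟨x, hx⟩, hπ]
  have hh'0 : ∀ x ∈ LinearMap.ker f, h' x = 0 := by
    intro x hx
    show p (h x) = 0
    ext
    rw [hpapply]
    show h x - σ (π (h x)) = (0 : I)
    rw [show π (h x) = e x from rfl, hee x hx, hσenv ⟨x, hx⟩, sub_self]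
  -- `(f, e)` is injective
  have hfe : Function.Injective (f.prod e) := by
    rw [← LinearMap.ker_eq_bot]
    rw [Submodule.eq_bot_iff]
    intro x hx
    simp only [LinearMap.mem_ker, LinearMap.prod_apply, Function.prod, Prod.mk_eq_zero] at hx
    obtain ⟨hx1, hx2⟩ := hx
    have hxm : x ∈ LinearMap.ker f := hx1
    have : env ⟨x, hxm⟩ = env 0 := by
      rw [map_zero, ← hee x hxm, hx2]
    have := henv_inj this
    exact congrArg Subtype.val this
  -- absorb `h'` via an extension `θ`
  obtain ⟨θ, hθ⟩ := hJinj.out (f.prod e) hfe h'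
  simp only [LinearMap.prod_apply, Function.prod] at hθ
  set P := LinearMap.range (f.prod e) with hPdef
  -- the big map `Φ : B × I → ((B × IK) ⧸ P) × J`
  set T1 : B × I →ₗ[A] B × IK :=
    (LinearMap.fst A B I).prod (π.comp (LinearMap.snd A B I)) with hT1def
  set Φ : B × I →ₗ[A] ((B × IK) ⧸ P) × ↥J :=
    (P.mkQ.comp T1).prod (p.comp (LinearMap.snd A B I) - θ.comp T1) with hΦdef
  have hΦapply : ∀ q : B × I,
      Φ q = (P.mkQ (q.1, π q.2), p q.2 - θ (q.1, π q.2)) := fun q => rfl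
  -- `Φ` is surjective
  have hΦsurj : Function.Surjective Φ := by
    rintro ⟨c, j⟩
    obtain ⟨⟨b, k⟩, rfl⟩ := P.mkQ_surjective c
    refine ⟨(b, σ k + ((j + θ (b, k) : ↥J) : I)), ?_⟩
    have hπi : π (σ k + ((j + θ (b, k) : ↥J) : I)) = k := by
      rw [map_add, hπ, (j + θ (b, k)).2, add_zero]
    rw [hΦapply, hπi]
    refine Prod.ext rfl ?_
    show p (σ k + ((j + θ (b, k) : ↥J) : I)) - θ (b, k) = j
    have : p (σ k + ((j + θ (b, k) : ↥J) : I)) = j + θ (b, k) := by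
      ext
      rw [hpapply, hπi]
      show σ k + ((j + θ (b, k) : ↥J) : I) - σ k = ((j + θ (b, k) : ↥J) : I)
      abel
    rw [this]
    abel
  -- the kernel of `Φ` is the image of `(f, h)`
  have hΦker : LinearMap.ker Φ = LinearMap.range (f.prod h) := by
    apply le_antisymm
    · rintro ⟨b, i⟩ hbi
      rw [LinearMap.mem_ker, hΦapply] at hbi
      have h1 : P.mkQ (b, π i) = 0 := congrArg Prod.fst hbi
      have h2 : p i - θ (b, π i) = 0 := congrArg Prod.snd hbi
      rw [Submodule.mkQ_apply, Submodule.Quotient.mk_eq_zero] at h1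
      obtain ⟨x, hx⟩ := h1
      simp only [LinearMap.prod_apply, Function.prod, Prod.mk.injEq] at hx
      obtain ⟨hxb, hxk⟩ := hx
      refine ⟨x, ?_⟩
      simp only [LinearMap.prod_apply, Function.prod, Prod.mk.injEq]
      refine ⟨hxb, ?_⟩
      have h3 : p i = θ (b, π i) := by
        have := sub_eq_zero.mp h2
        exact this
      rw [← hxb, ← hxk, hθ x] at h3
      have h4 : (p i : I) = (h' x : I) := by rw [h3]
      rw [hpapply] at h4
      have h5 : (h' x : I) = h x - σ (e x) := hpapply (h x)
      rw [h5] at h4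
      have hπie : π i = e x := hxk.symm
      rw [hπie] at h4
      have : i = h x := by
        have := sub_left_injective h4
        exact this
      rw [this]
    · rintro ⟨b, i⟩ ⟨x, hx⟩
      simp only [LinearMap.prod_apply, Function.prod, Prod.mk.injEq] at hx
      obtain ⟨hxb, hxi⟩ := hx
      rw [LinearMap.mem_ker, hΦapply, ← hxb, ← hxi]
      have hπh : π (h x) = e x := rfl
      have hph : p (h x) = h' x := rfl
      rw [hπh, hph, hθ x]
      refine Prod.ext ?_ (by simp)
      show P.mkQ (f x, e x) = 0
      rw [Submodule.mkQ_apply, Submodule.Quotient.mk_eq_zero]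
      exact ⟨x, rfl⟩
  -- assemble the final isomorphism
  refine ⟨↥J, inferInstance, inferInstance, hJinj, eI, e, h', hee, hh'0,
    fun x => heIapply (h x), ⟨?_⟩⟩
  exact (LinearMap.quotKerEquivOfSurjective g hg).symm ≪≫ₗ
    Submodule.quotEquivOfEq _ _ (by rw [hexact, ← hΦker]) ≪≫ₗ
    LinearMap.quotKerEquivOfSurjective Φ hΦsurj
end
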